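/- Unimodularity of the G-matrix (Conjecture 1.2(iv), proved under the sign-coherence hypothesis): assume the global sign-coherence hypothesis. Then for every n×n skew-symmetrizable integer matrix B and every finite sequence w of indices in {1,…,n}, the matrix G^B(w) is invertible over ℤ, i.e. det(G^B(w)) = 1 or det(G^B(w)) = -1; equivalently, the columns of G^B(w) form a ℤ-basis of ℤⁿ. -/
import Mathlib


open Matrix

/-- Entrywise positive part `[B]₊`. -/
def matPos {n : ℕ} (B : Matrix (Fin n) (Fin n) ℤ) : Matrix (Fin n) (Fin n) ℤ :=
  fun i j => max (B i j) 0

/-- `B^{k•}` : the matrix `B` with all entries outside row `k` set to zero. -/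
def rowR {n : ℕ} (B : Matrix (Fin n) (Fin n) ℤ) (k : Fin n) : Matrix (Fin n) (Fin n) ℤ :=
  fun i j => if i = k then B i j else 0

/-- `B^{•k}` : the matrix `B` with all entries outside column `k` set to zero. -/
def colR {n : ℕ} (B : Matrix (Fin n) (Fin n) ℤ) (k : Fin n) : Matrix (Fin n) (Fin n) ℤ :=
  fun i j => if j = k then B i j else 0

/-- `J_k` : the identity matrix with its `(k,k)` entry replaced by `-1`. -/
def Jmat (n : ℕ) (k : Fin n) : Matrix (Fin n) (Fin n) ℤ :=
  Matrix.diagonal (fun i => if i = k then -1 else 1)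

/-- Matrix mutation `μ_k(B)`. -/
def mutB {n : ℕ} (B : Matrix (Fin n) (Fin n) ℤ) (k : Fin n) : Matrix (Fin n) (Fin n) ℤ :=
  fun i j =>
    if i = k ∨ j = k then -B i j
    else B i j + max (B i k) 0 * max (B k j) 0 - max (-B i k) 0 * max (-B k j) 0

/-- Mutation of the `C`-matrix in direction `l`, where `B` is the current exchange matrix. -/
def mutC {n : ℕ} (B C : Matrix (Fin n) (Fin n) ℤ) (l : Fin n) : Matrix (Fin n) (Fin n) ℤ :=
  fun i j =>
    if j = l then -C i j
    else C i j + max (C i l) 0 * max (B l j) 0 - max (-C i l) 0 * max (-B l j) 0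

/-- One step of the simultaneous `(B, C, G)` recursion with initial exchange matrix `B0`. -/
def BCGstep {n : ℕ} (B0 : Matrix (Fin n) (Fin n) ℤ)
    (p : Matrix (Fin n) (Fin n) ℤ × Matrix (Fin n) (Fin n) ℤ × Matrix (Fin n) (Fin n) ℤ)
    (l : Fin n) :
    Matrix (Fin n) (Fin n) ℤ × Matrix (Fin n) (Fin n) ℤ × Matrix (Fin n) (Fin n) ℤ :=
  (mutB p.1 l, mutC p.1 p.2.1 l,
    p.2.2 * (Jmat n l + colR (matPos p.1) l) - B0 * colR (matPos p.2.1) l)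

/-- The triple `(B_m, C_m, G_m)` obtained from `(B0, I, I)` by mutating along the word `w`. -/
def BCG {n : ℕ} (B0 : Matrix (Fin n) (Fin n) ℤ) (w : List (Fin n)) :
    Matrix (Fin n) (Fin n) ℤ × Matrix (Fin n) (Fin n) ℤ × Matrix (Fin n) (Fin n) ℤ :=
  w.foldl (BCGstep B0) (B0, 1, 1)

/-- `B^B(w)` : the exchange matrix at the end of the word `w`. -/
def Bmat {n : ℕ} (B0 : Matrix (Fin n) (Fin n) ℤ) (w : List (Fin n)) : Matrix (Fin n) (Fin n) ℤ :=
  (BCG B0 w).1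

/-- `C^B(w)` : the matrix of c-vectors at the end of the word `w`. -/
def Cmat {n : ℕ} (B0 : Matrix (Fin n) (Fin n) ℤ) (w : List (Fin n)) : Matrix (Fin n) (Fin n) ℤ :=
  (BCG B0 w).2.1

/-- `G^B(w)` : the matrix of g-vectors at the end of the word `w`. -/
def Gmat {n : ℕ} (B0 : Matrix (Fin n) (Fin n) ℤ) (w : List (Fin n)) : Matrix (Fin n) (Fin n) ℤ :=
  (BCG B0 w).2.2

/-- `B` is skew-symmetrized by the diagonal matrix with (positive) diagonal entries `d`,
i.e. `Bᵀ = -D B D⁻¹`, stated integrally as `Bᵀ D = -(D B)`. -/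
def SkewSymmBy {n : ℕ} (B : Matrix (Fin n) (Fin n) ℤ) (d : Fin n → ℤ) : Prop :=
  (∀ i, 0 < d i) ∧ Bᵀ * Matrix.diagonal d = -(Matrix.diagonal d * B)

/-- `B` is skew-symmetrizable. -/
def SkewSymmetrizable {n : ℕ} (B : Matrix (Fin n) (Fin n) ℤ) : Prop :=
  ∃ d : Fin n → ℤ, SkewSymmBy B d

/-- Every column of `C` has all entries nonnegative or all entries nonpositive. -/
def SignCoherent {n : ℕ} (C : Matrix (Fin n) (Fin n) ℤ) : Prop :=
  ∀ j, (∀ i, 0 ≤ C i j) ∨ (∀ i, C i j ≤ 0)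

/-- The global sign-coherence hypothesis in rank `n`: all C-matrices of all cluster patterns
of rank `n` are sign-coherent. -/
def GlobalSC (n : ℕ) : Prop :=
  ∀ B' : Matrix (Fin n) (Fin n) ℤ, SkewSymmetrizable B' →
    ∀ w' : List (Fin n), SignCoherent (Cmat B' w')

/-- The sign `ε_j(C)` of the `j`-th column of a sign-coherent matrix `C`:
`-1` if column `j` contains a negative entry, `1` otherwise. -/
def epsCol {n : ℕ} (C : Matrix (Fin n) (Fin n) ℤ) (j : Fin n) : ℤ :=
  if ∃ i, C i j < 0 then -1 else 1

section GmatAux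

variable {n : ℕ}

/-! ### Entry lemmas for the building blocks -/

lemma colR_mul_apply (X M : Matrix (Fin n) (Fin n) ℤ) (l i j : Fin n) :
    (colR X l * M) i j = X i l * M l j := by
  rw [Matrix.mul_apply]
  rw [Finset.sum_eq_single_of_mem l (Finset.mem_univ l)
    (fun k _ hk => by simp [colR, hk])]
  simp [colR]

lemma mul_rowR_apply (M Y : Matrix (Fin n) (Fin n) ℤ) (l i j : Fin n) :
    (M * rowR Y l) i j = M i l * Y l j := by
  rw [Matrix.mul_apply]
  rw [Finset.sum_eq_single_of_mem l (Finset.mem_univ l)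
    (fun k _ hk => by simp [rowR, hk])]
  simp [rowR]

lemma mul_colR (M X : Matrix (Fin n) (Fin n) ℤ) (l : Fin n) :
    M * colR X l = colR (M * X) l := by
  ext i j
  by_cases hj : j = l <;> simp [Matrix.mul_apply, colR, hj]

lemma JE_mul_apply (X M : Matrix (Fin n) (Fin n) ℤ) (l i j : Fin n) :
    ((Jmat n l + colR X l) * M) i j
      = (if i = l then (-1:ℤ) else 1) * M i j + X i l * M l j := by
  rw [Matrix.add_mul, Matrix.add_apply, colR_mul_apply, Jmat, Matrix.diagonal_mul]

lemma mul_JF_apply (M Y : Matrix (Fin n) (Fin n) ℤ) (l i j : Fin n) :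
    (M * (Jmat n l + rowR Y l)) i j
      = M i j * (if j = l then (-1:ℤ) else 1) + M i l * Y l j := by
  rw [Matrix.mul_add, Matrix.add_apply, mul_rowR_apply, Jmat, Matrix.mul_diagonal]

/-- `(J_l + E)^2 = 1` for any `E` supported on column `l` with `E l l = 0`. -/
lemma JE_sq (X : Matrix (Fin n) (Fin n) ℤ) (l : Fin n) (h0 : X l l = 0) :
    (Jmat n l + colR X l) * (Jmat n l + colR X l) = 1 := by
  ext i j
  rw [JE_mul_apply]
  simp only [Matrix.add_apply, Jmat, Matrix.diagonal_apply, colR, Matrix.one_apply]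
  by_cases hi : i = l <;> by_cases hj : j = l <;> by_cases hij : i = j <;>
    simp_all <;> (first | (intro h; exact absurd h.symm hj) | ring1)

lemma assoc_helper (G E Bc F : Matrix (Fin n) (Fin n) ℤ) (h : E * E = 1) :
    (G * E) * (E * Bc * F) = G * Bc * F := by
  have h2 : (G * E) * (E * Bc * F) = G * ((E * E) * (Bc * F)) := by
    simp only [Matrix.mul_assoc]
  rw [h2, h, Matrix.one_mul, ← Matrix.mul_assoc]

/-! ### Scalar identities -/

lemma scalar_pos (a b : ℤ) :
    a * max b 0 + max (-a) 0 * b = max a 0 * max b 0 - max (-a) 0 * max (-b) 0 := by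
  rcases le_total a 0 with ha | ha <;> rcases le_total b 0 with hb | hb
  · rw [max_eq_right ha, max_eq_right hb, max_eq_left (neg_nonneg.mpr ha),
      max_eq_left (neg_nonneg.mpr hb)]; ring
  · rw [max_eq_right ha, max_eq_left hb, max_eq_left (neg_nonneg.mpr ha),
      max_eq_right (neg_nonpos.mpr hb)]; ring
  · rw [max_eq_left ha, max_eq_right hb, max_eq_right (neg_nonpos.mpr ha),
      max_eq_left (neg_nonneg.mpr hb)]; ring
  · rw [max_eq_left ha, max_eq_left hb, max_eq_right (neg_nonpos.mpr ha),
      max_eq_right (neg_nonpos.mpr hb)]; ring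

lemma scalar_neg (a b : ℤ) :
    a * max (-b) 0 + max a 0 * b = max a 0 * max b 0 - max (-a) 0 * max (-b) 0 := by
  rcases le_total a 0 with ha | ha <;> rcases le_total b 0 with hb | hb
  · rw [max_eq_right ha, max_eq_right hb, max_eq_left (neg_nonneg.mpr ha),
      max_eq_left (neg_nonneg.mpr hb)]; ring
  · rw [max_eq_right ha, max_eq_left hb, max_eq_left (neg_nonneg.mpr ha),
      max_eq_right (neg_nonpos.mpr hb)]; ring
  · rw [max_eq_left ha, max_eq_right hb, max_eq_right (neg_nonpos.mpr ha),
      max_eq_left (neg_nonneg.mpr hb)]; ring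
  · rw [max_eq_left ha, max_eq_left hb, max_eq_right (neg_nonpos.mpr ha),
      max_eq_right (neg_nonpos.mpr hb)]; ring

/-! ### Factorization of matrix mutation -/

lemma mutB_pos (B : Matrix (Fin n) (Fin n) ℤ) (l : Fin n) (hll : B l l = 0) :
    (Jmat n l + colR (matPos (-B)) l) * B * (Jmat n l + rowR (matPos B) l) = mutB B l := by
  ext i j
  rw [Matrix.mul_assoc, JE_mul_apply, mul_JF_apply, mul_JF_apply]
  simp only [matPos, Matrix.neg_apply, mutB]
  by_cases hi : i = l <;> by_cases hj : j = l
  · subst hi; subst hj; simp [hll]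
  · subst hi; simp [hj, hll]
  · subst hj; simp [hi, hll]
  · rw [if_neg hi, if_neg hj, if_neg (by tauto : ¬(i = l ∨ j = l)), hll]
    have h := scalar_pos (B i l) (B l j)
    ring_nf
    ring_nf at h
    linarith

lemma mutB_neg (B : Matrix (Fin n) (Fin n) ℤ) (l : Fin n) (hll : B l l = 0) :
    (Jmat n l + colR (matPos B) l) * B * (Jmat n l + rowR (matPos (-B)) l) = mutB B l := by
  ext i j
  rw [Matrix.mul_assoc, JE_mul_apply, mul_JF_apply, mul_JF_apply]
  simp only [matPos, Matrix.neg_apply, mutB]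
  by_cases hi : i = l <;> by_cases hj : j = l
  · subst hi; subst hj; simp [hll]
  · subst hi; simp [hj, hll]
  · subst hj; simp [hi, hll]
  · rw [if_neg hi, if_neg hj, if_neg (by tauto : ¬(i = l ∨ j = l)), hll]
    have h := scalar_neg (B i l) (B l j)
    ring_nf
    ring_nf at h
    linarith

/-! ### Factorization of C-mutation under sign coherence -/

lemma mutC_pos (Bc C : Matrix (Fin n) (Fin n) ℤ) (l : Fin n) (hll : Bc l l = 0)
    (h : ∀ i, 0 ≤ C i l) :
    mutC Bc C l = C * (Jmat n l + rowR (matPos Bc) l) := by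
  ext i j
  rw [mul_JF_apply]
  simp only [matPos, mutC]
  by_cases hj : j = l
  · subst hj; simp [hll]
  · rw [if_neg hj, if_neg hj, max_eq_left (h i),
      max_eq_right (neg_nonpos.mpr (h i))]
    ring

lemma mutC_neg (Bc C : Matrix (Fin n) (Fin n) ℤ) (l : Fin n) (hll : Bc l l = 0)
    (h : ∀ i, C i l ≤ 0) :
    mutC Bc C l = C * (Jmat n l + rowR (matPos (-Bc)) l) := by
  ext i j
  rw [mul_JF_apply]
  simp only [matPos, Matrix.neg_apply, mutC]
  by_cases hj : j = l
  · subst hj; simp [hll]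
  · rw [if_neg hj, if_neg hj, max_eq_right (h i),
      max_eq_left (neg_nonneg.mpr (h i))]
    ring

/-! ### colR / matPos helpers -/

lemma colR_matPos_of_nonneg (C : Matrix (Fin n) (Fin n) ℤ) (l : Fin n)
    (h : ∀ i, 0 ≤ C i l) : colR (matPos C) l = colR C l := by
  ext i j
  by_cases hj : j = l
  · subst hj; simp [colR, matPos, max_eq_left (h i)]
  · simp [colR, hj]

lemma colR_matPos_of_nonpos (C : Matrix (Fin n) (Fin n) ℤ) (l : Fin n)
    (h : ∀ i, C i l ≤ 0) : colR (matPos C) l = 0 := by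
  ext i j
  by_cases hj : j = l
  · subst hj; simp [colR, matPos, max_eq_right (h i)]
  · simp [colR, hj]

lemma colR_matPos_sub (Bc : Matrix (Fin n) (Fin n) ℤ) (l : Fin n) :
    colR (matPos Bc) l - colR Bc l = colR (matPos (-Bc)) l := by
  ext i j
  simp only [Matrix.sub_apply, colR, matPos, Matrix.neg_apply]
  split_ifs <;> omega

/-! ### Skew-symmetrizability -/

lemma skew_entry {B : Matrix (Fin n) (Fin n) ℤ} {d : Fin n → ℤ}
    (hd : SkewSymmBy B d) (i j : Fin n) : B j i * d j = -(d i * B i j) := by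
  have h := congrFun (congrFun hd.2 i) j
  simpa [Matrix.mul_diagonal, Matrix.diagonal_mul, Matrix.transpose_apply,
    Matrix.neg_apply] using h

lemma diag_zero {B : Matrix (Fin n) (Fin n) ℤ} {d : Fin n → ℤ}
    (hd : SkewSymmBy B d) (i : Fin n) : B i i = 0 := by
  have h := skew_entry hd i i
  have h2 : d i * (B i i + B i i) = 0 := by linear_combination h
  rcases mul_eq_zero.mp h2 with h' | h'
  · exact absurd h' (hd.1 i).ne'
  · omega

lemma mutB_skew {B : Matrix (Fin n) (Fin n) ℤ} {d : Fin n → ℤ}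
    (hd : SkewSymmBy B d) (k : Fin n) : SkewSymmBy (mutB B k) d := by
  have hpos := hd.1
  have hs := skew_entry hd
  refine ⟨hpos, ?_⟩
  ext i j
  simp only [Matrix.mul_diagonal, Matrix.diagonal_mul, Matrix.transpose_apply,
    Matrix.neg_apply]
  by_cases h : i = k ∨ j = k
  · rw [mutB, mutB, if_pos h, if_pos (Or.symm h)]
    have := hs i j
    linarith
  · push_neg at h
    rw [mutB, mutB, if_neg (by tauto : ¬(j = k ∨ i = k)),
      if_neg (by tauto : ¬(i = k ∨ j = k))]
    have hA : d j * max (B j k) 0 = d k * max (-B k j) 0 := by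
      rw [mul_max_of_nonneg _ _ (hpos j).le, mul_max_of_nonneg _ _ (hpos k).le,
        mul_zero, mul_zero]
      congr 1
      linear_combination hs k j
    have hB' : d k * max (B k i) 0 = d i * max (-B i k) 0 := by
      rw [mul_max_of_nonneg _ _ (hpos k).le, mul_max_of_nonneg _ _ (hpos i).le,
        mul_zero, mul_zero]
      congr 1
      linear_combination hs i k
    have hA' : d j * max (-B j k) 0 = d k * max (B k j) 0 := by
      rw [mul_max_of_nonneg _ _ (hpos j).le, mul_max_of_nonneg _ _ (hpos k).le,
        mul_zero, mul_zero]
      congr 1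
      linear_combination -hs k j
    have hB'' : d k * max (-B k i) 0 = d i * max (B i k) 0 := by
      rw [mul_max_of_nonneg _ _ (hpos k).le, mul_max_of_nonneg _ _ (hpos i).le,
        mul_zero, mul_zero]
      congr 1
      linear_combination -hs i k
    have hk0 : d k ≠ 0 := (hpos k).ne'
    have P1 : max (B j k) 0 * max (B k i) 0 * d j
        = d i * (max (-B i k) 0 * max (-B k j) 0) := by
      apply mul_left_cancel₀ hk0
      calc d k * (max (B j k) 0 * max (B k i) 0 * d j)
          = (d j * max (B j k) 0) * (d k * max (B k i) 0) := by ring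
        _ = (d k * max (-B k j) 0) * (d i * max (-B i k) 0) := by rw [hA, hB']
        _ = d k * (d i * (max (-B i k) 0 * max (-B k j) 0)) := by ring
    have P2 : max (-B j k) 0 * max (-B k i) 0 * d j
        = d i * (max (B i k) 0 * max (B k j) 0) := by
      apply mul_left_cancel₀ hk0
      calc d k * (max (-B j k) 0 * max (-B k i) 0 * d j)
          = (d j * max (-B j k) 0) * (d k * max (-B k i) 0) := by ring
        _ = (d k * max (B k j) 0) * (d i * max (B i k) 0) := by rw [hA', hB'']
        _ = d k * (d i * (max (B i k) 0 * max (B k j) 0)) := by ring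
    linear_combination hs i j + P1 - P2

/-! ### The main invariant -/

lemma main_invariant (hGSC : GlobalSC n) (B : Matrix (Fin n) (Fin n) ℤ)
    (d : Fin n → ℤ) (hd : SkewSymmBy B d) (w : List (Fin n)) :
    SkewSymmBy (Bmat B w) d ∧ B * Cmat B w = Gmat B w * Bmat B w ∧
      ((Gmat B w).det = 1 ∨ (Gmat B w).det = -1) := by
  induction w using List.reverseRecOn with
  | nil =>
    refine ⟨hd, ?_, Or.inl ?_⟩
    · show B * (1:Matrix (Fin n) (Fin n) ℤ) = 1 * B
      rw [Matrix.mul_one, Matrix.one_mul]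
    · show (1 : Matrix (Fin n) (Fin n) ℤ).det = 1
      exact Matrix.det_one
  | append_singleton w l ih =>
    obtain ⟨hskew, hBC, hdet⟩ := ih
    have hfold : BCG B (w ++ [l]) = BCGstep B (BCG B w) l := by
      simp [BCG, List.foldl_append]
    have hBm : Bmat B (w ++ [l]) = mutB (Bmat B w) l := by
      rw [Bmat, hfold]; rfl
    have hCm : Cmat B (w ++ [l]) = mutC (Bmat B w) (Cmat B w) l := by
      rw [Cmat, hfold]; rfl
    have hGm : Gmat B (w ++ [l]) = Gmat B w * (Jmat n l + colR (matPos (Bmat B w)) l)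
        - B * colR (matPos (Cmat B w)) l := by
      rw [Gmat, hfold]; rfl
    have hll : Bmat B w l l = 0 := diag_zero hskew l
    have hskew' : SkewSymmBy (Bmat B (w ++ [l])) d := by
      rw [hBm]; exact mutB_skew hskew l
    refine ⟨hskew', ?_, ?_⟩ <;>
      rcases hGSC B ⟨d, hd⟩ w l with hsc | hsc
    · -- product identity, ε = +1
      have hG' : Gmat B (w ++ [l]) = Gmat B w * (Jmat n l + colR (matPos (-Bmat B w)) l) := by
        rw [hGm, colR_matPos_of_nonneg _ _ hsc, mul_colR, hBC, ← mul_colR,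
          ← Matrix.mul_sub, add_sub_assoc, colR_matPos_sub]
      have hsq := JE_sq (matPos (-Bmat B w)) l (by simp [matPos, hll])
      rw [hCm, hBm, hG', mutC_pos _ _ _ hll hsc, ← mutB_pos (Bmat B w) l hll,
        ← Matrix.mul_assoc, hBC, assoc_helper _ _ _ _ hsq]
    · -- product identity, ε = -1
      have hG' : Gmat B (w ++ [l]) = Gmat B w * (Jmat n l + colR (matPos (Bmat B w)) l) := by
        rw [hGm, colR_matPos_of_nonpos _ _ hsc, Matrix.mul_zero, sub_zero]
      have hsq := JE_sq (matPos (Bmat B w)) l (by simp [matPos, hll])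
      rw [hCm, hBm, hG', mutC_neg _ _ _ hll hsc, ← mutB_neg (Bmat B w) l hll,
        ← Matrix.mul_assoc, hBC, assoc_helper _ _ _ _ hsq]
    · -- determinant, ε = +1
      have hG' : Gmat B (w ++ [l]) = Gmat B w * (Jmat n l + colR (matPos (-Bmat B w)) l) := by
        rw [hGm, colR_matPos_of_nonneg _ _ hsc, mul_colR, hBC, ← mul_colR,
          ← Matrix.mul_sub, add_sub_assoc, colR_matPos_sub]
      have hsq := JE_sq (matPos (-Bmat B w)) l (by simp [matPos, hll])
      have hdE : (Jmat n l + colR (matPos (-Bmat B w)) l).det = 1 ∨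
          (Jmat n l + colR (matPos (-Bmat B w)) l).det = -1 := by
        apply mul_self_eq_one_iff.mp
        rw [← Matrix.det_mul, hsq, Matrix.det_one]
      rw [hG', Matrix.det_mul]
      rcases hdet with h1 | h1 <;> rcases hdE with h2 | h2 <;> rw [h1, h2] <;> norm_num
    · -- determinant, ε = -1
      have hG' : Gmat B (w ++ [l]) = Gmat B w * (Jmat n l + colR (matPos (Bmat B w)) l) := by
        rw [hGm, colR_matPos_of_nonpos _ _ hsc, Matrix.mul_zero, sub_zero]
      have hsq := JE_sq (matPos (Bmat B w)) l (by simp [matPos, hll])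
      have hdE : (Jmat n l + colR (matPos (Bmat B w)) l).det = 1 ∨
          (Jmat n l + colR (matPos (Bmat B w)) l).det = -1 := by
        apply mul_self_eq_one_iff.mp
        rw [← Matrix.det_mul, hsq, Matrix.det_one]
      rw [hG', Matrix.det_mul]
      rcases hdet with h1 | h1 <;> rcases hdE with h2 | h2 <;> rw [h1, h2] <;> norm_num

end GmatAux

/-- unimodularity of the G-matrix: under the global sign-coherence hypothesis,
`G^B(w)` is invertible over `ℤ`, i.e. `det (G^B(w)) = ±1`. -/
theorem Gmat_det_unit {n : ℕ} (hGSC : GlobalSC n) (B : Matrix (Fin n) (Fin n) ℤ)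
    (hB : SkewSymmetrizable B) (w : List (Fin n)) :
    (Gmat B w).det = 1 ∨ (Gmat B w).det = -1 := by
  obtain ⟨d, hd⟩ := hB
  exact (main_invariant hGSC B d hd w).2.2
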